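/- arXiv:1402.0196 — 3 statements merged into one kernel-verified Lean document; each statement's English description precedes it below -/
import Mathlib

section
/- Every caterpillar admits a graceful labeling. -/
open SimpleGraph

/-- The weight of an edge under a vertex labeling: `|f u - f v|`. -/
def edgeWt {V : Type*} (f : V → ℕ) : Sym2 V → ℕ :=
  Sym2.lift ⟨fun u v => ((f u : ℤ) - f v).natAbs, fun u v => by simp only []; omega⟩

/-- `f` is a graceful labeling of `G`: injective into `{0,...,m}` with induced
edge weights exactly `{1,...,m}`, where `m` is the number of edges. -/
def IsGracefulLabeling {V : Type*} (G : SimpleGraph V) (f : V → ℕ) : Prop :=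
  Function.Injective f ∧ (∀ v, f v ≤ G.edgeSet.ncard) ∧
    (edgeWt f) '' G.edgeSet = Set.Icc 1 G.edgeSet.ncard

/-- `G` admits a graceful labeling. -/
def IsGraceful {V : Type*} (G : SimpleGraph V) : Prop :=
  ∃ f : V → ℕ, IsGracefulLabeling G f

/-- `p` is a longest path in `G`. -/
def IsLongestPath {V : Type*} (G : SimpleGraph V) {u v : V} (p : G.Walk u v) : Prop :=
  p.IsPath ∧ ∀ (w x : V) (q : G.Walk w x), q.IsPath → q.length ≤ p.length

/-- `G` is a tree all of whose vertices are within distance `k` of some longest path.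
`k = 1` gives caterpillars, `k = 2` gives lobsters. -/
def IsKDistantTree {V : Type*} (G : SimpleGraph V) (k : ℕ) : Prop :=
  G.IsTree ∧ ∃ (u v : V) (p : G.Walk u v), IsLongestPath G p ∧
    ∀ a : V, ∃ b ∈ p.support, G.dist a b ≤ k

/-- `G` is a lobster shell: a lobster with a longest path `P` such that every vertex not
on `P` having a neighbor on `P` has degree exactly `2`. -/
def IsLobsterShell {V : Type*} (G : SimpleGraph V) : Prop :=
  G.IsTree ∧ ∃ (u v : V) (p : G.Walk u v), IsLongestPath G p ∧
    (∀ a : V, ∃ b ∈ p.support, G.dist a b ≤ 2) ∧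
    (∀ a : V, a ∉ p.support → (∃ b ∈ p.support, G.Adj a b) → (G.neighborSet a).ncard = 2)

/-- `f` is a bipartite labeling of `G`. -/
def IsBipartiteLabeling {V : Type*} (G : SimpleGraph V) (f : V → ℕ) : Prop :=
  Function.Injective f ∧ (∀ v, f v ≤ G.edgeSet.ncard) ∧
    ∃ c : ℤ, ∀ u v : V, G.Adj u v →
      ((f u : ℤ) ≤ c ∧ c < (f v : ℤ)) ∨ ((f v : ℤ) ≤ c ∧ c < (f u : ℤ))

/-- The number of distinct edge weights induced by `f` on `G`. -/
noncomputable def distinctWeightCount {V : Type*} (G : SimpleGraph V) (f : V → ℕ) : ℕ :=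
  ((edgeWt f) '' G.edgeSet).ncard

/-!
Order the vertices as `s₀`, the leaves at `s₀`, `s₁`, the leaves at `s₁`, … along the spine
`s₀ s₁ ⋯` of the caterpillar, and 2-colour them by the parity of their distance from `s₀`.
Label the vertices of one colour `0, 1, 2, …` and those of the other colour `m, m - 1, …`, both
in this order. Every vertex strictly between the ends of an edge has the colour of its later end,
so the weight of an edge is `m + 1` minus the position of its later end. Since every vertex but
`s₀` has exactly one earlier neighbour, the weights are exactly `1, …, m`.
-/

open Finset

lemma edgeWt_mk {V : Type*} (f : V → ℕ) (a b : V) :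
    edgeWt f s(a, b) = ((f a : ℤ) - f b).natAbs :=
  rfl

lemma isGracefulLabeling_of_injOn {V : Type*} {G : SimpleGraph V} {f : V → ℕ}
    (hf : Function.Injective f) (hle : ∀ v, f v ≤ G.edgeSet.ncard)
    (hmaps : Set.MapsTo (edgeWt f) G.edgeSet (Set.Icc 1 G.edgeSet.ncard))
    (hinj : Set.InjOn (edgeWt f) G.edgeSet) : IsGracefulLabeling G f := by
  refine ⟨hf, hle, Set.eq_of_subset_of_ncard_le hmaps.image_subset ?_ (Set.finite_Icc _ _)⟩
  rw [hinj.ncard_image, Set.ncard_Icc_nat]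
  omega

lemma Function.Injective.injective_of_lt_imp_ne {V α β : Type*} [LinearOrder α] {r : V → α}
    (hr : Function.Injective r) {g : V → β} (hg : ∀ x y, r x < r y → g x ≠ g y) :
    Function.Injective g := fun x y hxy =>
  by_contra fun hne => (lt_or_gt_of_ne (hr.ne hne)).elim (hg x y · hxy) (hg y x · hxy.symm)

namespace Zigzag

variable {V α : Type*} [Fintype V] [LinearOrder α] (r : V → α)

def before (x : V) : Finset V := {y | r y < r x}

def numBefore (P : V → Prop) [DecidablePred P] (x : V) : ℕ := #{y ∈ before r x | P y}

def label (m : ℕ) (c : V → Prop) [DecidablePred c] (x : V) : ℕ :=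
  if c x then numBefore r c x else m - numBefore r (¬ c ·) x

variable {r}

@[simp] lemma mem_before {x y : V} : y ∈ before r x ↔ r y < r x := by
  simp [before]

lemma card_before_lt (x : V) : #(before r x) < Fintype.card V :=
  card_lt_univ_of_notMem (x := x) (by simp)

lemma before_ssubset {x y : V} (h : r x < r y) : before r x ⊂ before r y :=
  ssubset_iff_of_subset (fun z hz => by simp only [mem_before] at hz ⊢; exact hz.trans h)
    |>.2 ⟨x, by simpa using h, by simp⟩

variable {P : V → Prop} [DecidablePred P]

lemma numBefore_lt_numBefore {x y : V} (hx : P x) (h : r x < r y) :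
    numBefore r P x < numBefore r P y :=
  card_lt_card <| ssubset_iff_of_subset (filter_subset_filter P (before_ssubset h).subset)
    |>.2 ⟨x, by simpa [hx] using h, by simp⟩

lemma numBefore_lt_card {x : V} (hx : P x) : numBefore r P x < #{y | P y} :=
  card_lt_card <| ssubset_iff_of_subset (filter_subset_filter P (subset_univ _))
    |>.2 ⟨x, by simpa using hx, by simp⟩

lemma numBefore_add_numBefore_not (x : V) :
    numBefore r P x + numBefore r (¬ P ·) x = #(before r x) :=
  card_filter_add_card_filter_not P

lemma numBefore_eq_add_one (hr : Function.Injective r) {a b : V} (hab : r a < r b) (ha : P a)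
    (hbetween : ∀ y, r a < r y → r y < r b → ¬ P y) :
    numBefore r P b = numBefore r P a + 1 := by
  classical
  have : {y ∈ before r b | P y} = insert a {y ∈ before r a | P y} := by
    ext y
    simp only [mem_insert, mem_filter, mem_before]
    rcases lt_trichotomy (r y) (r a) with h | h | h
    · simp [h, h.trans hab, hr.ne_iff.mp h.ne]
    · obtain rfl := hr h
      simp [hab, ha]
    · have := hbetween y h
      simp [h.not_gt, hr.ne_iff.mp h.ne']
      tauto
  rw [numBefore, this, card_insert_of_notMem (by simp)]
  rfl

lemma card_before_injective (hr : Function.Injective r) :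
    Function.Injective fun x => #(before r x) :=
  hr.injective_of_lt_imp_ne fun _ _ h => (card_lt_card (before_ssubset h)).ne

variable {c : V → Prop} [DecidablePred c] {m : ℕ}

lemma card_add_card_not (hm : Fintype.card V = m + 1) : #{y | c y} + #{y | ¬ c y} = m + 1 := by
  rw [← hm, ← card_univ]
  exact card_filter_add_card_filter_not _

lemma label_lt_card {x : V} (hx : c x) : label r m c x < #{y | c y} := by
  rw [label, if_pos hx]
  exact numBefore_lt_card hx

lemma card_le_label (hm : Fintype.card V = m + 1) {x : V} (hx : ¬ c x) :
    #{y | c y} ≤ label r m c x := by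
  have := card_add_card_not (c := c) hm
  have := numBefore_lt_card (r := r) (P := (¬ c ·)) hx
  rw [label, if_neg hx]
  omega

lemma label_le (hm : Fintype.card V = m + 1) (x : V) : label r m c x ≤ m := by
  by_cases hx : c x
  · have := label_lt_card (r := r) (m := m) hx
    have := card_add_card_not (c := c) hm
    omega
  · rw [label, if_neg hx]
    omega

lemma label_injective (hr : Function.Injective r) (hm : Fintype.card V = m + 1) :
    Function.Injective (label r m c) := by
  refine hr.injective_of_lt_imp_ne fun x y h => ?_
  by_cases hx : c x <;> by_cases hy : c y
  · rw [label, label, if_pos hx, if_pos hy]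
    exact (numBefore_lt_numBefore hx h).ne
  · exact ((label_lt_card hx).trans_le (card_le_label hm hy)).ne
  · exact ((label_lt_card hy).trans_le (card_le_label hm hx)).ne'
  · have := numBefore_lt_numBefore (r := r) (P := (¬ c ·)) hx h
    have := numBefore_lt_card (r := r) (P := (¬ c ·)) hy
    have := card_add_card_not (c := c) hm
    rw [label, label, if_neg hx, if_neg hy]
    omega

end Zigzag

structure IsZigzagOrder {V α : Type*} [LinearOrder α] (G : SimpleGraph V) (r : V → α)
    (c : V → Prop) : Prop where
  injective : Function.Injective r
  adj_iff_not : ∀ a b, G.Adj a b → (c a ↔ ¬ c b)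
  between : ∀ a b y, G.Adj a b → r a < r y → r y < r b → (c y ↔ c b)

namespace IsZigzagOrder

open Zigzag

variable {V α : Type*} [LinearOrder α] {G : SimpleGraph V} {r : V → α} {c : V → Prop}

lemma eq_of_adj_of_lt (h : IsZigzagOrder G r c) {a a' b : V} (ha : G.Adj a b)
    (ha' : G.Adj a' b) (hab : r a < r b) (ha'b : r a' < r b) : a = a' := by
  by_contra hne
  rcases lt_or_gt_of_ne (h.injective.ne hne) with hlt | hlt
  · exact iff_not_self ((h.between a b a' ha hlt ha'b).symm.trans (h.adj_iff_not a' b ha'))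
  · exact iff_not_self ((h.between a' b a ha' hlt hab).symm.trans (h.adj_iff_not a b ha))

lemma exists_eq_mk_of_mem_edgeSet (h : IsZigzagOrder G r c) {e : Sym2 V} (he : e ∈ G.edgeSet) :
    ∃ a b, G.Adj a b ∧ r a < r b ∧ e = s(a, b) := by
  induction e using Sym2.ind with
  | h a b =>
    rcases lt_or_gt_of_ne (h.injective.ne (G.ne_of_adj he)) with hlt | hlt
    · exact ⟨a, b, he, hlt, rfl⟩
    · exact ⟨b, a, G.adj_symm he, hlt, Sym2.eq_swap⟩

variable [Fintype V] [DecidablePred c] {m : ℕ}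

lemma edgeWt_label (h : IsZigzagOrder G r c) (hm : Fintype.card V = m + 1) {a b : V}
    (hab : G.Adj a b) (hlt : r a < r b) :
    edgeWt (label r m c) s(a, b) = m + 1 - #(before r b) := by
  have := numBefore_add_numBefore_not (r := r) (P := c) b
  have := card_add_card_not (c := c) hm
  have hbetween := fun y => h.between a b y hab
  by_cases hb : c b
  · have ha : ¬ c a := fun ha => (h.adj_iff_not a b hab).mp ha hb
    have hstep := numBefore_eq_add_one (P := (¬ c ·)) h.injective hlt ha
      (fun y h1 h2 => not_not.mpr ((hbetween y h1 h2).mpr hb))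
    have := numBefore_lt_card (r := r) hb
    have := numBefore_lt_card (r := r) (P := (¬ c ·)) ha
    rw [edgeWt_mk, label, label, if_pos hb, if_neg ha]
    omega
  · have ha : c a := by have := h.adj_iff_not a b hab; tauto
    have hstep := numBefore_eq_add_one (P := c) h.injective hlt ha
      (fun y h1 h2 => mt (hbetween y h1 h2).mp hb)
    have := numBefore_lt_card (r := r) ha
    have := numBefore_lt_card (r := r) (P := (¬ c ·)) hb
    rw [edgeWt_mk, label, label, if_pos ha, if_neg hb]
    omega

theorem isGracefulLabeling_label (h : IsZigzagOrder G r c)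
    (hcard : Fintype.card V = G.edgeSet.ncard + 1) :
    IsGracefulLabeling G (label r G.edgeSet.ncard c) := by
  refine isGracefulLabeling_of_injOn (label_injective h.injective hcard) (label_le hcard) ?_ ?_
  · intro e he
    obtain ⟨a, b, hab, hlt, rfl⟩ := h.exists_eq_mk_of_mem_edgeSet he
    have := card_pos.mpr ⟨a, (mem_before.mpr hlt : a ∈ before r b)⟩
    have := card_before_lt (r := r) b
    rw [h.edgeWt_label hcard hab hlt, Set.mem_Icc]
    omega
  · intro e he e' he' hw
    obtain ⟨a, b, hab, hlt, rfl⟩ := h.exists_eq_mk_of_mem_edgeSet he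
    obtain ⟨a', b', hab', hlt', rfl⟩ := h.exists_eq_mk_of_mem_edgeSet he'
    rw [h.edgeWt_label hcard hab hlt, h.edgeWt_label hcard hab' hlt'] at hw
    have := card_before_lt (r := r) b
    have := card_before_lt (r := r) b'
    obtain rfl : b = b' := card_before_injective h.injective (by dsimp only; omega)
    rw [h.eq_of_adj_of_lt hab hab' hlt hlt']

end IsZigzagOrder

namespace SimpleGraph

variable {V : Type*} {G : SimpleGraph V}

namespace IsAcyclic

lemma length_eq_dist (hG : G.IsAcyclic) {u v : V} {p : G.Walk u v} (hp : p.IsPath) :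
    p.length = G.dist u v := by
  obtain ⟨q, hq, hq'⟩ := p.reachable.exists_path_of_dist
  rw [← hq', Subtype.mk.inj (hG.subsingleton_path u v |>.elim ⟨p, hp⟩ ⟨q, hq⟩)]

lemma mem_support_of_adj_of_dist_eq_add_one (hG : G.IsAcyclic) {u v a b : V} {p : G.Walk u v}
    (hp : p.IsPath) (hb : b ∈ p.support) (hab : G.Adj a b) (hd : G.dist u b = G.dist u a + 1) :
    a ∈ p.support := by
  classical
  let p' := p.takeUntil b hb
  obtain ⟨q, hq, hq'⟩ := (p'.reachable.trans hab.symm.reachable).exists_path_of_dist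
  refine p.support_takeUntil_subset_support hb <|
    hG.mem_support_of_ne_mem_support_of_adj_of_isPath (hp.takeUntil hb) hq hab.symm fun hb' => ?_
  have := (G.dist_le (q.takeUntil b hb')).trans (q.length_takeUntil_le_length hb')
  omega

lemma eq_of_adj_of_dist_eq_add_one (hG : G.IsAcyclic) {u a a' b : V} (hr : G.Reachable u b)
    (ha : G.Adj a b) (ha' : G.Adj a' b) (hd : G.dist u b = G.dist u a + 1)
    (hd' : G.dist u b = G.dist u a' + 1) : a = a' := by
  obtain ⟨p, hp, -⟩ := hr.exists_path_of_dist
  rw [hG.eq_penultimate_of_adj_end hp ha.symm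
      (hG.mem_support_of_adj_of_dist_eq_add_one hp p.end_mem_support ha hd),
    hG.eq_penultimate_of_adj_end hp ha'.symm
      (hG.mem_support_of_adj_of_dist_eq_add_one hp p.end_mem_support ha' hd')]

lemma injOn_dist_support (hG : G.IsAcyclic) {u v : V} {p : G.Walk u v} (hp : p.IsPath) :
    Set.InjOn (G.dist u) {x | x ∈ p.support} := by
  classical
  have getVert_dist : ∀ x ∈ p.support, p.getVert (G.dist u x) = x := fun x hx => by
    rw [← hG.length_eq_dist (hp.takeUntil hx), p.getVert_length_takeUntil hx]
  intro x hx y hy hxy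
  rw [← getVert_dist x hx, hxy, getVert_dist y hy]

end IsAcyclic

namespace IsTree

variable {u v : V} {p : G.Walk u v}

lemma exists_adj_mem_support (hG : G.IsTree) (hcover : ∀ a, ∃ b ∈ p.support, G.dist a b ≤ 1)
    {x : V} (hx : x ∉ p.support) : ∃ b ∈ p.support, G.Adj x b := by
  obtain ⟨b, hb, hd⟩ := hcover x
  have := hG.connected.pos_dist_of_ne (u := x) (v := b) (by rintro rfl; exact hx hb)
  exact ⟨b, hb, dist_eq_one_iff_adj.mp (by omega)⟩

lemma dist_eq_add_one_of_adj_of_notMem (hG : G.IsTree) (hp : p.IsPath)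
    (hcover : ∀ a, ∃ b ∈ p.support, G.dist a b ≤ 1) {x c : V} (hx : x ∉ p.support)
    (hxc : G.Adj x c) : G.dist u x = G.dist u c + 1 := by
  have of_mem : ∀ {x b}, x ∉ p.support → b ∈ p.support → G.Adj x b →
      G.dist u x = G.dist u b + 1 := fun hx hb hxb =>
    (hG.dist_eq_dist_add_one_of_adj u hxb).resolve_right fun h =>
      hx (hG.isAcyclic.mem_support_of_adj_of_dist_eq_add_one hp hb hxb h)
  refine (hG.dist_eq_dist_add_one_of_adj u hxc).resolve_right fun h => ?_
  by_cases hc : c ∈ p.support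
  · exact hx (hG.isAcyclic.mem_support_of_adj_of_dist_eq_add_one hp hc hxc h)
  · obtain ⟨b, hb, hcb⟩ := hG.exists_adj_mem_support hcover hc
    obtain rfl := hG.isAcyclic.eq_of_adj_of_dist_eq_add_one (hG.connected u c) hxc hcb.symm h
      (of_mem hc hb hcb)
    exact hx hb

lemma mem_support_and_dist_of_adj (hG : G.IsTree) (hp : p.IsPath)
    (hcover : ∀ a, ∃ b ∈ p.support, G.dist a b ≤ 1) {a b : V} (hab : G.Adj a b) :
    (a ∈ p.support ∧ G.dist u b = G.dist u a + 1) ∨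
      (b ∈ p.support ∧ G.dist u a = G.dist u b + 1) := by
  rcases hG.dist_eq_dist_add_one_of_adj u hab with h | h
  · refine .inr ⟨by_contra fun hb => ?_, h⟩
    have := hG.dist_eq_add_one_of_adj_of_notMem hp hcover hb hab.symm
    omega
  · refine .inl ⟨by_contra fun ha => ?_, h⟩
    have := hG.dist_eq_add_one_of_adj_of_notMem hp hcover ha hab
    omega

end IsTree

/-- Sorts the vertices as `s₀`, the leaves at `s₀`, `s₁`, the leaves at `s₁`, … along the spine
`p = s₀ s₁ ⋯`. -/
noncomputable def caterpillarKey [DecidableEq V] {u v : V} (p : G.Walk u v) (x : V) : ℕ :=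
  2 * G.dist u x + if x ∈ p.support then 1 else 0

lemma IsTree.dist_eq_of_caterpillarKey_le [DecidableEq V] (hG : G.IsTree) {u v : V}
    {p : G.Walk u v} (hp : p.IsPath) (hcover : ∀ a, ∃ b ∈ p.support, G.dist a b ≤ 1)
    {a b y : V} (hab : G.Adj a b) (hay : caterpillarKey p a ≤ caterpillarKey p y)
    (hyb : caterpillarKey p y ≤ caterpillarKey p b) (hya : y ≠ a) : G.dist u y = G.dist u b := by
  unfold caterpillarKey at hay hyb
  rcases hG.mem_support_and_dist_of_adj hp hcover hab with ⟨ha, hd⟩ | ⟨hb, hd⟩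
  · rw [if_pos ha] at hay
    by_cases hy : y ∈ p.support
    · have : G.dist u y ≠ G.dist u a := fun h => hya (hG.isAcyclic.injOn_dist_support hp hy ha h)
      split_ifs at hay hyb <;> omega
    · split_ifs at hay hyb <;> omega
  · split_ifs at hay hyb <;> omega

lemma IsTree.isZigzagOrder_caterpillarKey [Fintype V] [DecidableEq V] (hG : G.IsTree) {u v : V}
    {p : G.Walk u v} (hp : p.IsPath) (hcover : ∀ a, ∃ b ∈ p.support, G.dist a b ≤ 1) :
    IsZigzagOrder G (fun x => toLex (caterpillarKey p x, Fintype.equivFin V x))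
      (fun x => Even (G.dist u x)) where
  injective x y h := (Fintype.equivFin V).injective (Prod.ext_iff.mp (toLex.injective h)).2
  adj_iff_not a b hab := by
    rcases hG.dist_eq_dist_add_one_of_adj u hab with h | h <;> simp [h, Nat.even_add_one]
  between a b y hab hay hyb := by
    rw [Prod.Lex.toLex_lt_toLex'] at hay hyb
    rw [hG.dist_eq_of_caterpillarKey_le hp hcover hab hay.1 hyb.1]
    rintro rfl
    exact (hay.2 rfl).false

end SimpleGraph

theorem stmt2 {V : Type*} [Fintype V] (G : SimpleGraph V)
    (h : IsKDistantTree G 1) : IsGraceful G := by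
  classical
  obtain ⟨hG, u, v, p, ⟨hp, -⟩, hcover⟩ := h
  have hcard : Fintype.card V = G.edgeSet.ncard + 1 := by
    rw [← hG.card_edgeFinset, ← coe_edgeFinset, Set.ncard_coe_finset]
  exact ⟨_, (hG.isZigzagOrder_caterpillarKey hp hcover).isGracefulLabeling_label hcard⟩
end

section
/- Every tree of even order that contains a perfect matching and whose contree (the tree obtained by contracting all edges of the perfect matching) is a caterpillar admits a strongly graceful labeling. -/
open SimpleGraph

/-- The contree of `G` with respect to a perfect matching `M`: the graph obtained
by contracting each edge of `M`. -/
def contree {V : Type*} {G : SimpleGraph V} (M : G.Subgraph) :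
    SimpleGraph (Quot (fun a b : V => a = b ∨ M.Adj a b)) :=
  SimpleGraph.fromRel (fun x y =>
    ∃ a b : V, Quot.mk (fun a b : V => a = b ∨ M.Adj a b) a = x ∧
      Quot.mk (fun a b : V => a = b ∨ M.Adj a b) b = y ∧ G.Adj a b)

/-!
A caterpillar is graceful, with label `0` at the first vertex `w` of its spine: remove a leaf
hanging off `w`, or `w` itself when it is a leaf, label the smaller caterpillar by induction
(with `0` at the new first spine vertex) and give the removed leaf the top label `N`, the
number of edges; in the second case pass to the complementary labeling `N - g`, which makes
`w` the vertex labelled `0`.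

Let `g` be a graceful labeling of the contree, which has `m` vertices when the tree has `n = 2m`.
The sum mod 2 of a proper 2-colouring of the tree and the pull-back of one of the contree is a side
`s : V → Bool` that changes exactly along the matching edges. Label `v` by `2 g [v]` on one side
and by `n - 1 - 2 g [v]` on the other. Matching edges then have label sum `n - 1` and weights
`|4 g [v] - (n - 1)|`, which run through the odd numbers below `n`, while every other edge gets
twice the weight of its image in the contree, so these run through the even numbers below `n`.
-/

lemma exists_natAbs_four_mul_sub_eq {m k : ℕ} (hk : Odd k) (hkm : k ≤ 2 * m - 1) :
    ∃ t ≤ m - 1, ((4 * t : ℤ) - (2 * m - 1)).natAbs = k := by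
  obtain ⟨j, rfl⟩ := hk
  rcases Nat.even_or_odd (m + j) with ⟨i, hi⟩ | ⟨i, hi⟩
  · exact ⟨i, by omega, by omega⟩
  · exact ⟨i - j, by omega, by omega⟩

lemma Function.Injective.exists_eq_of_lt_card {α : Type*} [Finite α] {g : α → ℕ}
    (hg : Function.Injective g) (hlt : ∀ a, g a < Nat.card α) {t : ℕ} (ht : t < Nat.card α) :
    ∃ a, g a = t := by
  have hbij : Function.Bijective fun a => (⟨g a, hlt a⟩ : Fin (Nat.card α)) :=
    Function.Injective.bijective_of_nat_card_le (fun a b h => hg (congrArg Fin.val h)) (by simp)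
  obtain ⟨a, ha⟩ := hbij.2 ⟨t, ht⟩
  exact ⟨a, congrArg Fin.val ha⟩

namespace SimpleGraph

variable {V : Type*} {G : SimpleGraph V} {M : G.Subgraph}

@[simp] lemma edgeWt_mk (f : V → ℕ) (a b : V) :
    edgeWt f s(a, b) = ((f a : ℤ) - f b).natAbs := rfl

lemma IsTree.ncard_edgeSet [Finite V] (hG : G.IsTree) : G.edgeSet.ncard = Nat.card V - 1 := by
  rw [← Nat.card_coe_set_eq, ← (isTree_iff_connected_and_card.mp hG).2, Nat.add_sub_cancel]

lemma IsGracefulLabeling.ncard_sub {f : V → ℕ} (hf : IsGracefulLabeling G f) :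
    IsGracefulLabeling G (fun v => G.edgeSet.ncard - f v) := by
  obtain ⟨hinj, hle, himg⟩ := hf
  refine ⟨fun a b hab => hinj ?_, fun v => Nat.sub_le _ _, ?_⟩
  · have := hle a; have := hle b; simp only at hab; omega
  · rw [← himg]
    refine Set.image_congr fun e _ => ?_
    induction e with
    | _ a b => have := hle a; have := hle b; simp only [edgeWt_mk]; omega

lemma IsAcyclic.eq_of_adj_of_adj {z y u : V} (hG : G.IsAcyclic) (hzy : G.Adj z y)
    (hzu : G.Adj z u) (q : G.Walk y u) (hz : z ∉ q.support) : u = y := by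
  classical
  have hpath : (q.bypass.cons hzy).IsPath :=
    q.bypass_isPath.cons fun h => hz (q.support_bypass_subset_support h)
  simpa using hG.eq_snd_of_adj_start hpath hzu (by simp)

def Walk.IsDominating {u v : V} (p : G.Walk u v) : Prop :=
  ∀ a, a ∈ p.support ∨ ∃ b ∈ p.support, G.Adj a b

lemma Walk.IsDominating.induce {s : Set V} {u v : V} {p : G.Walk u v}
    (hs : ∀ x ∈ p.support, x ∈ s)
    (hp : ∀ a ∈ s, a ∈ p.support ∨ ∃ b ∈ p.support, G.Adj a b) :
    (p.induce s hs).IsDominating := by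
  intro a
  rcases hp a a.2 with h | ⟨b, hb, hab⟩
  · exact Or.inl (by simpa using h)
  · exact Or.inr ⟨⟨b, hs b hb⟩, by simpa using hb, hab⟩

lemma Walk.IsDominating.eq_of_adj_of_notMem_support {w x y z u : V} {p : G.Walk w x}
    (hdom : p.IsDominating) (hG : G.IsAcyclic) (hy : y ∈ p.support) (hz : z ∉ p.support)
    (hzy : G.Adj z y) (hzu : G.Adj z u) : u = y := by
  classical
  obtain ⟨q, hqz⟩ : ∃ q : G.Walk w u, z ∉ q.support := by
    rcases hdom u with hu | ⟨b, hb, hub⟩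
    · exact ⟨p.takeUntil u hu, fun h => hz (p.support_takeUntil_subset_support hu h)⟩
    · refine ⟨(p.takeUntil b hb).concat hub.symm, fun h => ?_⟩
      rw [Walk.support_concat, List.mem_append, List.mem_singleton] at h
      exact h.elim (fun h => hz (p.support_takeUntil_subset_support hb h)) hzu.ne
  refine hG.eq_of_adj_of_adj hzy hzu ((p.takeUntil y hy).reverse.append q) fun h => ?_
  rw [Walk.mem_support_append_iff, Walk.support_reverse, List.mem_reverse] at h
  exact h.elim (fun h => hz (p.support_takeUntil_subset_support hy h)) hqz

lemma Walk.IsDominating.of_cons {w y x : V} {hwy : G.Adj w y} {q : G.Walk y x}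
    (hdom : (q.cons hwy).IsDominating) (hleaf : ∀ u, G.Adj w u → u = y) (a : V) (ha : a ≠ w) :
    a ∈ q.support ∨ ∃ b ∈ q.support, G.Adj a b := by
  rcases hdom a with h | ⟨b, hb, hab⟩
  · rw [Walk.support_cons, List.mem_cons] at h
    exact Or.inl (h.resolve_left ha)
  · rw [Walk.support_cons, List.mem_cons] at hb
    rcases hb with rfl | hb
    · exact Or.inl (hleaf a hab.symm ▸ q.start_mem_support)
    · exact Or.inr ⟨b, hb, hab⟩

lemma IsTree.induce_compl_singleton_of_leaf (hG : G.IsTree) {z y : V} (hzy : G.Adj z y)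
    (hleaf : ∀ u, G.Adj z u → u = y) : (G.induce {z}ᶜ).IsTree := by
  have : Fintype (G.neighborSet z) := ((Set.finite_singleton y).subset hleaf).fintype
  refine ⟨hG.connected.induce_compl_singleton_of_degree_eq_one ?_, hG.isAcyclic.induce _⟩
  exact degree_eq_one_iff_existsUnique_adj.mpr ⟨y, hzy, hleaf⟩

lemma image_edgeWt_eq_insert_of_leaf (g : V → ℕ) {z y : V} (hzy : G.Adj z y)
    (hleaf : ∀ u, G.Adj z u → u = y) :
    edgeWt g '' G.edgeSet =
      insert (edgeWt g s(z, y)) (edgeWt (g ∘ Subtype.val) '' (G.induce {z}ᶜ).edgeSet) := by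
  ext k
  constructor
  · rintro ⟨e, he, rfl⟩
    induction e with
    | _ a b =>
      by_cases ha : a = z
      · subst ha
        rw [hleaf b he]
        exact Or.inl rfl
      by_cases hb : b = z
      · subst hb
        rw [hleaf a he.symm, Sym2.eq_swap]
        exact Or.inl rfl
      exact Or.inr ⟨s(⟨a, ha⟩, ⟨b, hb⟩), he, rfl⟩
  · rintro (rfl | ⟨e, he, rfl⟩)
    · exact ⟨_, hzy, rfl⟩
    · induction e with
      | _ a b => exact ⟨s(a.1, b.1), he, rfl⟩

lemma IsTree.isGracefulLabeling_of_leaf [Finite V] (hG : G.IsTree) {z y : V} (hzy : G.Adj z y)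
    (hleaf : ∀ u, G.Adj z u → u = y) {g : V → ℕ}
    (hg : IsGracefulLabeling (G.induce {z}ᶜ) (g ∘ Subtype.val)) (hy : g y = 0)
    (hz : g z = G.edgeSet.ncard) : IsGracefulLabeling G g := by
  obtain ⟨hinj, hle, himg⟩ := hg
  have hcard : (G.induce {z}ᶜ).edgeSet.ncard + 1 = G.edgeSet.ncard := by
    have h1 : Nat.card ({z}ᶜ : Set V) + 1 = Nat.card V := by
      rw [Nat.card_coe_set_eq, ← Set.ncard_singleton z, Set.ncard_compl_add_ncard]
    have h2 : 1 < Nat.card V := Finite.one_lt_card_iff_nontrivial.mpr ⟨z, y, hzy.ne⟩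
    rw [(hG.induce_compl_singleton_of_leaf hzy hleaf).ncard_edgeSet, hG.ncard_edgeSet]
    omega
  have hlt : ∀ v, v ≠ z → g v < G.edgeSet.ncard := fun v hv => by
    have := hle ⟨v, hv⟩; simp only [Function.comp_apply] at this; omega
  refine ⟨fun a b hab => ?_, fun v => ?_, ?_⟩
  · by_cases ha : a = z <;> by_cases hb : b = z
    · rw [ha, hb]
    · subst ha; have := hlt b hb; omega
    · subst hb; have := hlt a ha; omega
    · exact congrArg Subtype.val (@hinj ⟨a, ha⟩ ⟨b, hb⟩ hab)
  · by_cases hv : v = z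
    · rw [hv, hz]
    · exact (hlt v hv).le
  · rw [image_edgeWt_eq_insert_of_leaf g hzy hleaf, himg, edgeWt_mk, hy, hz]
    ext k
    simp only [Set.mem_insert_iff, Set.mem_Icc]
    omega

lemma Walk.IsPath.induce {s : Set V} {u v : V} {p : G.Walk u v} (hp : p.IsPath)
    (hs : ∀ x ∈ p.support, x ∈ s) : (p.induce s hs).IsPath :=
  Walk.IsPath.of_map (f := (Embedding.induce s).toHom) (by rwa [Walk.map_induce])

lemma exists_comp_val_eq_and_eq (z : V) (g : ({z}ᶜ : Set V) → ℕ) (k : ℕ) :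
    ∃ f : V → ℕ, f ∘ Subtype.val = g ∧ f z = k := by
  classical
  exact ⟨fun v => if h : v = z then k else g ⟨v, h⟩,
    funext fun v => dif_neg v.2, dif_pos rfl⟩

lemma isGracefulLabeling_zero [Subsingleton V] : IsGracefulLabeling G 0 := by
  obtain rfl : G = ⊥ := Subsingleton.elim _ _
  exact ⟨Function.injective_of_subsingleton _, fun _ => Nat.zero_le _, by simp⟩

lemma IsTree.exists_isGracefulLabeling_of_isDominating [Finite V] (hG : G.IsTree) {w x : V}
    {p : G.Walk w x} (hp : p.IsPath) (hdom : p.IsDominating) :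
    ∃ g : V → ℕ, IsGracefulLabeling G g ∧ g w = 0 := by
  classical
  induction hn : Nat.card V generalizing V with
  | zero =>
    have := hG.connected.nonempty
    exact absurd hn Nat.card_pos.ne'
  | succ n ih =>
    have hcard : ∀ z : V, Nat.card ({z}ᶜ : Set V) = n := fun z => by
      rw [Nat.card_coe_set_eq, Set.ncard_compl, Set.ncard_singleton, hn, Nat.add_sub_cancel]
    by_cases hleg : ∃ z, G.Adj w z ∧ z ∉ p.support
    · obtain ⟨z, hwz, hz⟩ := hleg
      have hleaf : ∀ u, G.Adj z u → u = w := fun u hzu =>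
        hdom.eq_of_adj_of_notMem_support hG.isAcyclic p.start_mem_support hz hwz.symm hzu
      have hs : ∀ v ∈ p.support, v ∈ ({z}ᶜ : Set V) := fun v hv hvz => hz (hvz ▸ hv)
      obtain ⟨g', hg', hg'w⟩ := ih (hG.induce_compl_singleton_of_leaf hwz.symm hleaf)
        (hp.induce hs) (Walk.IsDominating.induce hs fun a _ => hdom a) (hcard z)
      obtain ⟨g, rfl, hgz⟩ := exists_comp_val_eq_and_eq z g' G.edgeSet.ncard
      exact ⟨g, hG.isGracefulLabeling_of_leaf hwz.symm hleaf hg' hg'w hgz, hg'w⟩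
    · push Not at hleg
      cases p with
      | nil =>
        have hall : ∀ a, a = w := fun a => by
          rcases hdom a with ha | ⟨b, hb, hab⟩
          · simpa using ha
          · rw [Walk.support_nil, List.mem_singleton] at hb
            subst hb
            simpa using hleg a hab.symm
        have : Subsingleton V := ⟨fun a b => (hall a).trans (hall b).symm⟩
        exact ⟨0, isGracefulLabeling_zero, rfl⟩
      | @cons _ y _ hwy q =>
        rw [Walk.cons_isPath_iff] at hp
        have hleaf : ∀ u, G.Adj w u → u = y := fun u hwu => by
          simpa using hG.isAcyclic.eq_snd_of_adj_start (hp.1.cons hp.2) hwu (hleg u hwu)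
        have hs : ∀ v ∈ q.support, v ∈ ({w}ᶜ : Set V) := fun v hv hvw => hp.2 (hvw ▸ hv)
        obtain ⟨g', hg', hg'y⟩ := ih (hG.induce_compl_singleton_of_leaf hwy hleaf)
          (hp.1.induce hs) (Walk.IsDominating.induce hs fun a ha => hdom.of_cons hleaf a ha)
          (hcard w)
        obtain ⟨g, rfl, hgw⟩ := exists_comp_val_eq_and_eq w g' G.edgeSet.ncard
        refine ⟨_, (hG.isGracefulLabeling_of_leaf hwy hleaf hg' hg'y hgw).ncard_sub, ?_⟩
        simp only [hgw, Nat.sub_self]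

abbrev contreeMk (M : G.Subgraph) (v : V) : Quot (fun a b : V => a = b ∨ M.Adj a b) :=
  Quot.mk _ v

lemma Subgraph.IsMatching.contreeMk_eq_iff (hM : M.IsMatching) {a b : V} :
    contreeMk M a = contreeMk M b ↔ a = b ∨ M.Adj a b := by
  have hequiv : Equivalence (fun a b : V => a = b ∨ M.Adj a b) := by
    refine ⟨fun a => Or.inl rfl, fun h => h.imp Eq.symm Subgraph.Adj.symm, ?_⟩
    rintro a b c (rfl | hab) (rfl | hbc)
    exacts [Or.inl rfl, Or.inr hbc, Or.inr hab, Or.inl (hM.eq_of_adj_right hab hbc.symm)]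
  exact ⟨fun h => hequiv.eqvGen_iff.mp (Quot.eqvGen_exact h), fun h => Quot.sound h⟩

lemma Subgraph.IsMatching.contree_adj_contreeMk (hM : M.IsMatching) {a b : V} (hab : G.Adj a b) :
    (contree M).Adj (contreeMk M a) (contreeMk M b) ↔ ¬M.Adj a b := by
  rw [contree, fromRel_adj, Ne, hM.contreeMk_eq_iff]
  exact ⟨fun h hM => h.1 (Or.inr hM),
    fun h => ⟨fun h' => h'.elim hab.ne h, Or.inl ⟨a, b, rfl, rfl, hab⟩⟩⟩

lemma exists_adj_of_contree_adj {X Y : Quot (fun a b : V => a = b ∨ M.Adj a b)}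
    (h : (contree M).Adj X Y) : ∃ a b, contreeMk M a = X ∧ contreeMk M b = Y ∧ G.Adj a b := by
  obtain ⟨-, ⟨a, b, ha, hb, hab⟩ | ⟨a, b, ha, hb, hab⟩⟩ := fromRel_adj _ _ _ |>.mp h
  exacts [⟨a, b, ha, hb, hab⟩, ⟨b, a, hb, ha, hab.symm⟩]

lemma Subgraph.IsPerfectMatching.card_eq_two_mul [Finite V] (hM : M.IsPerfectMatching) :
    Nat.card V = 2 * Nat.card (Quot (fun a b : V => a = b ∨ M.Adj a b)) := by
  classical
  have := Fintype.ofFinite V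
  have := Fintype.ofFinite (Quot (fun a b : V => a = b ∨ M.Adj a b))
  have hfiber : ∀ q, Nat.card {v // contreeMk M v = q} = 2 := by
    rintro ⟨a⟩
    obtain ⟨b, hab, hb⟩ := isPerfectMatching_iff.mp hM a
    refine Nat.card_eq_two_iff.mpr ⟨⟨a, rfl⟩, ⟨b, ?_⟩, ?_, ?_⟩
    · exact hM.1.contreeMk_eq_iff.mpr (Or.inr hab.symm)
    · simpa using (M.adj_sub hab).ne
    · refine Set.eq_univ_of_forall fun ⟨v, hv⟩ => ?_
      rcases hM.1.contreeMk_eq_iff.mp hv with rfl | hva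
      · exact Or.inl rfl
      · exact Or.inr (Subtype.ext (hb v hva.symm))
  rw [← Nat.card_congr (Equiv.sigmaFiberEquiv (contreeMk M)), Nat.card_sigma]
  simp only [hfiber, Finset.sum_const, Finset.card_univ, smul_eq_mul, Nat.card_eq_fintype_card,
    mul_comm]

lemma exists_side_iff_not_adj (hM : M.IsMatching) (hG : G.Colorable 2)
    (hC : (contree M).Colorable 2) :
    ∃ s : V → Bool, ∀ a b, G.Adj a b → (s a = s b ↔ ¬M.Adj a b) := by
  obtain ⟨cG⟩ := hG
  obtain ⟨cC⟩ := hC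
  classical
  refine ⟨fun v => decide (cG v = cC (contreeMk M v)), fun a b hab => ?_⟩
  have hab' := cG.valid hab
  by_cases hm : M.Adj a b
  · have : contreeMk M a = contreeMk M b := hM.contreeMk_eq_iff.mpr (Or.inr hm)
    simp only [this, hm, not_true_eq_false, iff_false]
    revert hab'; generalize cG a = x; generalize cG b = y; generalize cC _ = z
    decide +revert
  · have hC' := cC.valid ((hM.contree_adj_contreeMk hab).mpr hm)
    simp only [hm, not_false_eq_true, iff_true]
    revert hab' hC'; generalize cG a = x; generalize cG b = y
    generalize cC (contreeMk M a) = z; generalize cC (contreeMk M b) = t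
    decide +revert

noncomputable def contreeLift (M : G.Subgraph) (s : V → Bool)
    (g : Quot (fun a b : V => a = b ∨ M.Adj a b) → ℕ) (v : V) : ℕ :=
  if s v then 2 * g (contreeMk M v) else Nat.card V - 1 - 2 * g (contreeMk M v)

section Lift

variable {s : V → Bool} {g : Quot (fun a b : V => a = b ∨ M.Adj a b) → ℕ}
  (hM : M.IsMatching) (hs : ∀ a b, G.Adj a b → (s a = s b ↔ ¬M.Adj a b))
  (hn : Nat.card V = 2 * Nat.card (Quot (fun a b : V => a = b ∨ M.Adj a b)))
  (hg : ∀ q, g q < Nat.card (Quot (fun a b : V => a = b ∨ M.Adj a b)))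

include hM hs hn hg in
lemma contreeLift_add_of_adj {a b : V} (hab : M.Adj a b) :
    contreeLift M s g a + contreeLift M s g b = Nat.card V - 1 ∧
      edgeWt (contreeLift M s g) s(a, b) =
        ((4 * g (contreeMk M a) : ℤ) - (Nat.card V - 1)).natAbs := by
  have hside : s a ≠ s b := fun h => (hs a b (M.adj_sub hab)).mp h hab
  have hq : contreeMk M b = contreeMk M a := hM.contreeMk_eq_iff.mpr (Or.inr hab.symm)
  have := hg (contreeMk M a)
  unfold contreeLift
  rw [edgeWt_mk, hq]
  revert hside
  cases s a <;> cases s b <;> simp <;> omega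

include hs hn hg in
lemma edgeWt_contreeLift_of_not_adj {a b : V} (hab : G.Adj a b) (hnab : ¬M.Adj a b) :
    edgeWt (contreeLift M s g) s(a, b) = 2 * edgeWt g s(contreeMk M a, contreeMk M b) := by
  have hside : s a = s b := (hs a b hab).mpr hnab
  have := hg (contreeMk M a)
  have := hg (contreeMk M b)
  unfold contreeLift
  rw [edgeWt_mk, edgeWt_mk, ← hside]
  cases s a <;> simp <;> omega

include hM hs hn hg in
lemma contreeLift_injective (hginj : Function.Injective g) :
    Function.Injective (contreeLift M s g) := by
  intro a b hab
  have := hg (contreeMk M a)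
  have := hg (contreeMk M b)
  have hside : s a = s b ∧ g (contreeMk M a) = g (contreeMk M b) := by
    unfold contreeLift at hab
    revert hab
    cases s a <;> cases s b <;> simp <;> omega
  rcases hM.contreeMk_eq_iff.mp (hginj hside.2) with h | h
  · exact h
  · exact absurd h ((hs a b (M.adj_sub h)).mp hside.1)

include hn hg in
lemma contreeLift_le (v : V) : contreeLift M s g v ≤ Nat.card V - 1 := by
  have := hg (contreeMk M v)
  unfold contreeLift
  split <;> omega

include hM hs hn hg in
lemma image_edgeWt_contreeLift [Finite V] (hspan : M.IsSpanning) (hginj : Function.Injective g)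
    (himg : edgeWt g '' (contree M).edgeSet =
      Set.Icc 1 (Nat.card (Quot (fun a b : V => a = b ∨ M.Adj a b)) - 1)) :
    edgeWt (contreeLift M s g) '' G.edgeSet = Set.Icc 1 (Nat.card V - 1) := by
  apply subset_antisymm
  · rintro k ⟨e, he, rfl⟩
    induction e with
    | _ a b =>
      have := hg (contreeMk M a)
      by_cases hm : M.Adj a b
      · rw [(contreeLift_add_of_adj hM hs hn hg hm).2, Set.mem_Icc]
        omega
      · have hw : edgeWt g s(contreeMk M a, contreeMk M b) ∈ edgeWt g '' (contree M).edgeSet :=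
          ⟨_, (hM.contree_adj_contreeMk he).mpr hm, rfl⟩
        rw [edgeWt_contreeLift_of_not_adj hs hn hg he hm, Set.mem_Icc]
        rw [himg, Set.mem_Icc] at hw
        dsimp only
        omega
  · intro k ⟨hk1, hk2⟩
    rcases Nat.even_or_odd k with ⟨j, rfl⟩ | hodd
    · obtain ⟨e, he, hej⟩ : j ∈ edgeWt g '' (contree M).edgeSet := by
        rw [himg, Set.mem_Icc]; omega
      induction e with
      | _ X Y =>
        obtain ⟨a, b, rfl, rfl, hab⟩ := exists_adj_of_contree_adj he
        have hnab := (hM.contree_adj_contreeMk hab).mp he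
        refine ⟨s(a, b), hab, ?_⟩
        rw [edgeWt_contreeLift_of_not_adj hs hn hg hab hnab, hej, two_mul]
    · rw [hn] at hk2
      obtain ⟨t, ht, htk⟩ := exists_natAbs_four_mul_sub_eq hodd hk2
      obtain ⟨⟨a⟩, rfl⟩ := hginj.exists_eq_of_lt_card hg (t := t) (by omega)
      obtain ⟨b, hab, -⟩ := hM (hspan a)
      refine ⟨s(a, b), M.adj_sub hab, ?_⟩
      rw [(contreeLift_add_of_adj hM hs hn hg hab).2, ← htk, hn]
      push_cast
      rfl

end Lift

theorem Subgraph.IsPerfectMatching.exists_stronglyGraceful_of_isGracefulLabeling_contree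
    [Finite V] (hM : M.IsPerfectMatching) (hG : G.IsTree) (hC : (contree M).IsTree)
    {g : Quot (fun a b : V => a = b ∨ M.Adj a b) → ℕ}
    (hg : IsGracefulLabeling (contree M) g) :
    ∃ f : V → ℕ, IsGracefulLabeling G f ∧
      ∀ a b, M.Adj a b → f a + f b = Nat.card V - 1 := by
  obtain ⟨s, hs⟩ := exists_side_iff_not_adj hM.1 hG.colorable_two hC.colorable_two
  have hn := hM.card_eq_two_mul
  obtain ⟨hginj, hgle, himg⟩ := hg
  rw [hC.ncard_edgeSet] at hgle himg
  have := hC.connected.nonempty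
  have hglt : ∀ q, g q < Nat.card (Quot (fun a b : V => a = b ∨ M.Adj a b)) := fun q => by
    have := hgle q
    have : 0 < Nat.card (Quot (fun a b : V => a = b ∨ M.Adj a b)) := Nat.card_pos
    omega
  refine ⟨contreeLift M s g, ⟨contreeLift_injective hM.1 hs hn hglt hginj, ?_, ?_⟩,
    fun a b hab => (contreeLift_add_of_adj hM.1 hs hn hglt hab).1⟩
  · rw [hG.ncard_edgeSet]
    exact contreeLift_le hn hglt
  · rw [hG.ncard_edgeSet]
    exact image_edgeWt_contreeLift hM.1 hs hn hglt hM.2 hginj himg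

lemma exists_isPath_isDominating_of_isKDistantTree_one (h : IsKDistantTree G 1) :
    ∃ (u v : V) (p : G.Walk u v), p.IsPath ∧ p.IsDominating := by
  obtain ⟨hG, u, v, p, ⟨hp, -⟩, hdist⟩ := h
  refine ⟨u, v, p, hp, fun a => ?_⟩
  obtain ⟨b, hb, hab⟩ := hdist a
  rcases Nat.le_one_iff_eq_zero_or_eq_one.mp hab with h0 | h1
  · exact Or.inl (hG.connected.dist_eq_zero_iff.mp h0 ▸ hb)
  · exact Or.inr ⟨b, hb, dist_eq_one_iff_adj.mp h1⟩

end SimpleGraph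

theorem stmt6_general {V : Type} [Fintype V] (G : SimpleGraph V) (M : G.Subgraph)
    (hT : G.IsTree) (hM : M.IsPerfectMatching)
    (hcat : IsKDistantTree (contree M) 1) :
    ∃ f : V → ℕ, IsGracefulLabeling G f ∧
      ∀ a b : V, M.Adj a b → f a + f b = Nat.card V - 1 := by
  obtain ⟨u, v, p, hp, hdom⟩ := exists_isPath_isDominating_of_isKDistantTree_one hcat
  obtain ⟨g, hg, -⟩ := hcat.1.exists_isGracefulLabeling_of_isDominating hp hdom
  exact hM.exists_stronglyGraceful_of_isGracefulLabeling_contree hT hcat.1 hg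

theorem stmt6 {V : Type} [Fintype V] (G : SimpleGraph V) (M : G.Subgraph)
    (hT : G.IsTree) (hE : Even (Nat.card V)) (hM : M.IsPerfectMatching)
    (hcat : IsKDistantTree (contree M) 1) :
    ∃ f : V → ℕ, IsGracefulLabeling G f ∧
      ∀ a b : V, M.Adj a b → f a + f b = Nat.card V - 1 :=
  stmt6_general G M hT hM hcat
end

section
/- For any lobster T of order n, the shell of T has a perfect matching if n' is even, and a matching covering n'-1 vertices if n' is odd, where n' is the order of the shell. -/
open SimpleGraph

/-!
Match consecutive vertices of the path `P`, leaving at most its first vertex unmatched. Every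
vertex off `P` has exactly one neighbour off `P`. The key fact is that in a tree at most one edge
joins `P` to a connected vertex set disjoint from it: so a vertex adjacent to `P`, which has
degree 2, has its second neighbour off `P`; and a vertex `w` at distance 2 from `P`, reaching `P`
through its neighbour `m`, has no other neighbour off `P`, as that neighbour would lie within
distance 2 of `P` and close up a connected set around `w` and `m` with two edges to `P`. Hence the
vertices off `P` are perfectly matched among themselves, all vertices but possibly one are
matched, and parity decides whether that one is.
-/

namespace SimpleGraph

variable {V : Type*} {G : SimpleGraph V}

namespace Subgraph

lemma exists_isMatching_verts_eq_of_existsUnique_adj {s : Set V}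
    (h : ∀ a ∈ s, ∃! b, b ∈ s ∧ G.Adj a b) :
    ∃ M : G.Subgraph, M.IsMatching ∧ M.verts = s :=
  ⟨(⊤ : G.Subgraph).induce s, fun a ha =>
    let ⟨b, hb, hbu⟩ := h a ha
    ⟨b, ⟨ha, hb⟩, fun c hc => hbu c hc.2⟩, rfl⟩

lemma IsMatching.even_ncard_verts [Finite V] {M : G.Subgraph} (hM : M.IsMatching) :
    Even M.verts.ncard := by
  have := Fintype.ofFinite M.verts
  rw [Set.ncard_eq_toFinset_card']
  exact hM.even_card

lemma IsMatching.exists_of_forall_ne_mem_verts [Finite V] {M : G.Subgraph} (hM : M.IsMatching)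
    (z : V) (hz : ∀ w, w ≠ z → w ∈ M.verts) :
    (Even (Nat.card V) → ∃ M : G.Subgraph, M.IsPerfectMatching) ∧
    (¬ Even (Nat.card V) →
      ∃ M : G.Subgraph, M.IsMatching ∧ M.verts.ncard = Nat.card V - 1) := by
  have hcard : 1 ≤ Nat.card V := Nat.card_pos_iff.mpr ⟨⟨z⟩, inferInstance⟩
  by_cases hzM : z ∈ M.verts
  · have hverts : M.verts = Set.univ :=
      Set.eq_univ_of_forall fun w => (eq_or_ne w z).elim (· ▸ hzM) (hz w)
    have heven := hM.even_ncard_verts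
    rw [hverts, Set.ncard_univ] at heven
    exact ⟨fun _ => ⟨M, hM, fun w => hverts ▸ Set.mem_univ w⟩, absurd heven⟩
  · have hverts : M.verts = {z}ᶜ := by
      ext w
      rcases eq_or_ne w z with rfl | hw
      · simp [hzM]
      · simp [hw, hz w hw]
    have hncard : M.verts.ncard = Nat.card V - 1 := by
      rw [hverts, Set.ncard_compl, Set.ncard_singleton]
    have heven := hM.even_ncard_verts
    rw [hncard] at heven
    refine ⟨fun hV => absurd heven ?_, fun _ => ⟨M, hM, hncard⟩⟩
    rw [Nat.even_sub hcard]
    simp [hV]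

end Subgraph

namespace Walk

lemma IsPath.exists_isMatching_forall_ne_start_mem_verts {u v : V} {p : G.Walk u v}
    (hp : p.IsPath) : ∃ M : G.Subgraph, M.IsMatching ∧ (∀ w ∈ M.verts, w ∈ p.support) ∧
      ∀ w ∈ p.support, w ≠ u → w ∈ M.verts := by
  induction p with
  | nil => exact ⟨⊥, fun _ h => h.elim, fun _ h => h.elim, by simp⟩
  | @cons u x v hux q ih =>
    obtain ⟨hq, hu⟩ := (cons_isPath_iff hux q).mp hp
    obtain ⟨M, hM, hMq, hMcover⟩ := ih hq
    have hcover_tail : ∀ w ∈ (cons hux q).support, w ≠ u → w ≠ x → w ∈ M.verts := by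
      intro w hw hwu hwx
      rw [support_cons, List.mem_cons] at hw
      exact hMcover w (hw.resolve_left hwu) hwx
    by_cases hx : x ∈ M.verts
    · refine ⟨M, hM, fun w hw => List.mem_cons_of_mem _ (hMq w hw), fun w hw hwu => ?_⟩
      by_cases hwx : w = x
      · exact hwx ▸ hx
      · exact hcover_tail w hw hwu hwx
    · have hdisj : Disjoint M.support (G.subgraphOfAdj hux).support := by
        rw [hM.support_eq_verts, (Subgraph.IsMatching.subgraphOfAdj hux).support_eq_verts,
          subgraphOfAdj_verts, Set.disjoint_insert_right, Set.disjoint_singleton_right]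
        exact ⟨fun hu' => hu (hMq u hu'), hx⟩
      refine ⟨M ⊔ G.subgraphOfAdj hux, hM.sup (.subgraphOfAdj hux) hdisj, ?_, ?_⟩
      · rintro w (hw | rfl | rfl)
        · exact List.mem_cons_of_mem _ (hMq w hw)
        · exact start_mem_support _
        · exact List.mem_cons_of_mem _ q.start_mem_support
      · intro w hw hwu
        by_cases hwx : w = x
        · exact Or.inr (Or.inr hwx)
        · exact Or.inl (hcover_tail w hw hwu hwx)

lemma exists_isPath_support_subset {u v : V} (p : G.Walk u v) {b c : V} (hb : b ∈ p.support)
    (hc : c ∈ p.support) : ∃ r : G.Walk b c, r.IsPath ∧ r.support ⊆ p.support := by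
  classical
  let r := (p.takeUntil b hb).reverse.append (p.takeUntil c hc)
  refine ⟨r.bypass, r.bypass_isPath, fun z hz => ?_⟩
  rcases (mem_support_append_iff _ _).mp (r.support_bypass_subset_support hz) with hz | hz
  · rw [support_reverse, List.mem_reverse] at hz
    exact support_takeUntil_subset_support p hb hz
  · exact support_takeUntil_subset_support p hc hz

end Walk

lemma IsAcyclic.eq_and_eq_of_adj_of_forall_notMem_support (hG : G.IsAcyclic) {u v a a' b b' : V}
    (p : G.Walk u v) (q : G.Walk a a') (hq : ∀ z ∈ q.support, z ∉ p.support)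
    (hab : G.Adj a b) (ha'b' : G.Adj a' b') (hb : b ∈ p.support) (hb' : b' ∈ p.support) :
    a = a' ∧ b = b' := by
  classical
  obtain ⟨r, hr, hrp⟩ := p.exists_isPath_support_subset hb hb'
  have hq' : ∀ z ∈ q.bypass.support, z ∉ p.support :=
    fun z hz => hq z (q.support_bypass_subset_support hz)
  have hpath₁ : (q.bypass.concat ha'b').IsPath :=
    q.bypass_isPath.concat (fun h => hq' _ h hb') ha'b'
  have hpath₂ : (Walk.cons hab r).IsPath :=
    hr.cons fun h => hq a q.start_mem_support (hrp h)
  have heq : q.bypass.concat ha'b' = Walk.cons hab r :=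
    congrArg Subtype.val ((hG.subsingleton_path a b').elim ⟨_, hpath₁⟩ ⟨_, hpath₂⟩)
  constructor
  · have ha' : a' ∈ (Walk.cons hab r).support := by
      simp [← heq, Walk.support_concat]
    rw [Walk.support_cons, List.mem_cons] at ha'
    exact (ha'.resolve_right fun h => hq a' q.end_mem_support (hrp h)).symm
  · have hb₁ : b ∈ (q.bypass.concat ha'b').support := by
      simp [heq]
    rw [Walk.support_concat, List.mem_append, List.mem_singleton] at hb₁
    exact hb₁.resolve_left fun h => hq' b h hb

lemma Reachable.eq_or_adj_or_exists_adj_adj_of_dist_le_two {a b : V} (hab : G.Reachable a b)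
    (h : G.dist a b ≤ 2) : a = b ∨ G.Adj a b ∨ ∃ m, G.Adj a m ∧ G.Adj m b := by
  obtain ⟨q, hq⟩ := hab.exists_walk_length_eq_dist
  rw [← hq] at h
  match q, h with
  | .nil, _ => exact Or.inl rfl
  | .cons ham .nil, _ => exact Or.inr (Or.inl ham)
  | .cons hcm (.cons hmb .nil), _ => exact Or.inr (Or.inr ⟨_, hcm, hmb⟩)
  | .cons _ (.cons _ (.cons _ _)), h => simp at h

lemma eq_or_eq_of_adj_of_ncard_neighborSet_eq_two {a x y z : V}
    (h : (G.neighborSet a).ncard = 2) (hx : G.Adj a x) (hy : G.Adj a y) (hxy : x ≠ y)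
    (hz : G.Adj a z) : z = x ∨ z = y := by
  by_contra! hne
  have hsub : ({z, x, y} : Set V) ⊆ G.neighborSet a := by
    rintro w (rfl | rfl | rfl) <;> assumption
  have hle := Set.ncard_le_ncard hsub (Set.finite_of_ncard_pos (by omega))
  rw [Set.ncard_insert_of_notMem (by simp [hne.1, hne.2]), Set.ncard_pair hxy] at hle
  omega

section NearWalk

variable {u v : V} {p : G.Walk u v}

lemma Connected.exists_adj_or_exists_adj_adj_of_dist_le_two (hG : G.Connected)
    (hd2 : ∀ a, ∃ b ∈ p.support, G.dist a b ≤ 2) {w : V} (hw : w ∉ p.support) :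
    (∃ b ∈ p.support, G.Adj w b) ∨
      ∃ m ∉ p.support, G.Adj w m ∧ ∃ b ∈ p.support, G.Adj m b := by
  obtain ⟨b, hb, hwb⟩ := hd2 w
  rcases (hG.preconnected w b).eq_or_adj_or_exists_adj_adj_of_dist_le_two hwb with
    rfl | hwb | ⟨m, hwm, hmb⟩
  · exact absurd hb hw
  · exact Or.inl ⟨b, hb, hwb⟩
  · by_cases hm : m ∈ p.support
    · exact Or.inl ⟨m, hm, hwm⟩
    · exact Or.inr ⟨m, hm, hwm, b, hb, hmb⟩

lemma IsAcyclic.existsUnique_adj_notMem_support_of_adj (hG : G.IsAcyclic) {w b : V}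
    (hw : w ∉ p.support) (hw2 : (G.neighborSet w).ncard = 2) (hb : b ∈ p.support)
    (hwb : G.Adj w b) : ∃! x, x ∉ p.support ∧ G.Adj w x := by
  obtain ⟨x, hwx, hxb⟩ : ∃ x, G.Adj w x ∧ x ≠ b := by
    by_contra! hno
    have hle := Set.ncard_le_ncard (s := G.neighborSet w) (t := {b}) hno
    simp at hle
    omega
  have hx : x ∉ p.support := fun hx =>
    hxb (hG.eq_and_eq_of_adj_of_forall_notMem_support p (Walk.nil : G.Walk w w)
      (by simpa using hw) hwx hwb hx hb).2
  refine ⟨x, ⟨hx, hwx⟩, fun y ⟨hy, hwy⟩ => ?_⟩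
  rcases eq_or_eq_of_adj_of_ncard_neighborSet_eq_two hw2 hwx hwb hxb hwy with rfl | rfl
  · rfl
  · exact absurd hb hy

lemma IsTree.existsUnique_adj_notMem_support_of_not_adj (hG : G.IsTree)
    (hd2 : ∀ a, ∃ b ∈ p.support, G.dist a b ≤ 2)
    (hdeg : ∀ a, a ∉ p.support → (∃ b ∈ p.support, G.Adj a b) →
      (G.neighborSet a).ncard = 2)
    {w : V} (hw : w ∉ p.support) (hwp : ¬ ∃ b ∈ p.support, G.Adj w b) :
    ∃! x, x ∉ p.support ∧ G.Adj w x := by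
  have hclass := fun y (hy : y ∉ p.support) =>
    hG.connected.exists_adj_or_exists_adj_adj_of_dist_le_two hd2 hy
  obtain ⟨b, hb, hwb⟩ | ⟨m, hm, hwm, b, hb, hmb⟩ := hclass w hw
  · exact absurd ⟨b, hb, hwb⟩ hwp
  refine ⟨m, ⟨hm, hwm⟩, fun y ⟨hy, hwy⟩ => ?_⟩
  by_contra hym
  obtain ⟨b', hb', hyb'⟩ | ⟨m', hm', hym', b', hb', hm'b'⟩ := hclass y hy
  · exact hym (hG.isAcyclic.eq_and_eq_of_adj_of_forall_notMem_support p
      (.cons hwm.symm (.cons hwy .nil)) (by simp [hm, hw, hy]) hmb hyb' hb hb').1.symm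
  · have hm'm : m' ≠ m := by
      rintro rfl
      rcases eq_or_eq_of_adj_of_ncard_neighborSet_eq_two (hdeg m' hm ⟨b, hb, hmb⟩) hmb hwm.symm
        (fun h => hw (h ▸ hb)) hym'.symm with rfl | rfl
      · exact hy hb
      · exact hwy.ne rfl
    exact hm'm (hG.isAcyclic.eq_and_eq_of_adj_of_forall_notMem_support p
      (.cons hwm.symm (.cons hwy (.cons hym' .nil))) (by simp [hm, hw, hy, hm'])
      hmb hm'b' hb hb').1.symm

lemma IsTree.existsUnique_adj_notMem_support (hG : G.IsTree)
    (hd2 : ∀ a, ∃ b ∈ p.support, G.dist a b ≤ 2)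
    (hdeg : ∀ a, a ∉ p.support → (∃ b ∈ p.support, G.Adj a b) →
      (G.neighborSet a).ncard = 2)
    {w : V} (hw : w ∉ p.support) : ∃! x, x ∉ p.support ∧ G.Adj w x := by
  by_cases hwp : ∃ b ∈ p.support, G.Adj w b
  · obtain ⟨b, hb, hwb⟩ := hwp
    exact hG.isAcyclic.existsUnique_adj_notMem_support_of_adj hw (hdeg w hw ⟨b, hb, hwb⟩) hb hwb
  · exact hG.existsUnique_adj_notMem_support_of_not_adj hd2 hdeg hw hwp

end NearWalk

end SimpleGraph

theorem stmt8 {V : Type*} [Fintype V] (G : SimpleGraph V)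
    (h : IsLobsterShell G) :
    (Even (Nat.card V) → ∃ M : G.Subgraph, M.IsPerfectMatching) ∧
    (¬ Even (Nat.card V) →
      ∃ M : G.Subgraph, M.IsMatching ∧ M.verts.ncard = Nat.card V - 1) := by
  obtain ⟨hG, u, v, p, ⟨hp, -⟩, hd2, hdeg⟩ := h
  obtain ⟨M₁, hM₁, hM₁p, hM₁cover⟩ := hp.exists_isMatching_forall_ne_start_mem_verts
  obtain ⟨M₂, hM₂, hM₂verts⟩ := Subgraph.exists_isMatching_verts_eq_of_existsUnique_adj
    (s := {w | w ∉ p.support}) fun w hw => hG.existsUnique_adj_notMem_support hd2 hdeg hw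
  have hdisj : Disjoint M₁.support M₂.support := by
    rw [hM₁.support_eq_verts, hM₂.support_eq_verts, hM₂verts, Set.disjoint_left]
    exact fun w hw => not_not.mpr (hM₁p w hw)
  refine (hM₁.sup hM₂ hdisj).exists_of_forall_ne_mem_verts u fun w hwu => ?_
  by_cases hw : w ∈ p.support
  · exact Or.inl (hM₁cover w hw hwu)
  · exact Or.inr (hM₂verts ▸ hw)
end
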